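/- arXiv:1008.3168 — 2 statements merged into one kernel-verified Lean document; each statement's English description precedes it below -/
import Mathlib

section
/- Let 0 < h ≤ 1 and m_h(ξ) = exp(-ξ²/4)/∑_{k∈ℤ} exp(-(ξ-2πk/h)²/4). There is an absolute constant C (depending only on universal constants) such that for every integer k̃ ≥ 1 and every ξ ∈ [2π(k̃-1)/h, 2πk̃/h], one has |m_h''(ξ)| ≤ C (k̃/h)² m_h(ξ). -/
/-!
Put `a = 2π/h ≥ 2π` and `λₖ = ak/2`. Since `exp(-(ξ - ak)²/4) = exp(-ξ²/4) exp(λₖξ - λₖ²)`, the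
multiplier is `m_h = 1/F₀`, where `Fₙ(ξ) = ∑ₖ λₖⁿ exp(λₖξ - λₖ²)` satisfies `Fₙ' = Fₙ₊₁`. Hence
`m_h'' = (2F₁² - F₀F₂)/F₀³`, and Cauchy–Schwarz `F₁² ≤ F₀F₂` gives `|m_h''| ≤ 2F₂/F₀²`.
It remains to see `F₂(ξ) ≲ (ξ² + a²) F₀(ξ)`: the weights `exp(λₖξ - λₖ²)` decay like
`exp(-π²(j² - |j|))` in the distance `j` from the index `k₀` nearest to `ξ/a`, while
`λ²_{k₀+j} ≲ (ξ² + a²) exp(2|j|)`. On `[a(k̃-1), ak̃]` we have `ξ² + a² ≤ 2a²k̃²`.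
-/

open Real

lemma deriv_deriv_inv_eq {𝕜 : Type*} [NontriviallyNormedField 𝕜] {F F₁ F₂ : 𝕜 → 𝕜}
    (hF : ∀ x, HasDerivAt F (F₁ x) x) (hF₁ : ∀ x, HasDerivAt F₁ (F₂ x) x) (h₀ : ∀ x, F x ≠ 0)
    (x : 𝕜) : deriv (deriv fun y => (F y)⁻¹) x = (2 * F₁ x ^ 2 - F x * F₂ x) / F x ^ 3 := by
  have h : deriv (fun y => (F y)⁻¹) = fun y => -F₁ y / F y ^ 2 :=
    funext fun y => ((hF y).inv (h₀ y)).deriv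
  rw [h, ((hF₁ x).fun_neg.fun_div ((hF x).fun_pow 2) (pow_ne_zero 2 (h₀ x))).deriv]
  field_simp [h₀ x]
  ring

section ExpSum

variable {ι : Type*} {c l : ι → ℝ}

noncomputable def expSumDeriv (c l : ι → ℝ) (n : ℕ) (x : ℝ) : ℝ :=
  ∑' i, l i ^ n * (c i * exp (l i * x))

def ExpMomentsSummable (c l : ι → ℝ) : Prop :=
  ∀ (n : ℕ) (R : ℝ), Summable fun i => |l i| ^ n * (|c i| * exp (|l i| * R))

lemma norm_expSumDeriv_term_le (i : ι) (n : ℕ) {x R : ℝ} (hx : |x| ≤ R) :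
    ‖l i ^ n * (c i * exp (l i * x))‖ ≤ |l i| ^ n * (|c i| * exp (|l i| * R)) := by
  have hexp : l i * x ≤ |l i| * R :=
    (le_abs_self _).trans ((abs_mul _ _).trans_le (mul_le_mul_of_nonneg_left hx (abs_nonneg _)))
  rw [Real.norm_eq_abs, abs_mul, abs_mul, abs_pow, abs_exp]
  gcongr

lemma ExpMomentsSummable.summable_term (hs : ExpMomentsSummable c l) (n : ℕ) (x : ℝ) :
    Summable fun i => l i ^ n * (c i * exp (l i * x)) :=
  .of_norm_bounded (hs n |x|) fun i => norm_expSumDeriv_term_le i n le_rfl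

lemma hasDerivAt_expSumDeriv (hs : ExpMomentsSummable c l) (n : ℕ) (x : ℝ) :
    HasDerivAt (expSumDeriv c l n) (expSumDeriv c l (n + 1) x) x := by
  have hx : x ∈ Set.Ioo (-(|x| + 1)) (|x| + 1) := abs_lt.1 (lt_add_one _)
  refine hasDerivAt_tsum_of_isPreconnected (hs (n + 1) (|x| + 1)) isOpen_Ioo isPreconnected_Ioo
    (fun i y _ => ?_)
    (fun i y hy => norm_expSumDeriv_term_le i (n + 1) (abs_le.2 ⟨hy.1.le, hy.2.le⟩)) hx (hs.summable_term n x) hx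
  exact ((((hasDerivAt_id' y).const_mul (l i)).exp.const_mul (c i)).const_mul (l i ^ n)).congr_deriv
    (by ring)

/-- Cauchy–Schwarz: `μ ↦ ∑ (l i - μ)² c i exp (l i x)` is a nonnegative quadratic, so its
discriminant is nonpositive. -/
lemma sq_expSumDeriv_one_le (hs : ExpMomentsSummable c l) (hc : ∀ i, 0 ≤ c i) (x : ℝ) :
    expSumDeriv c l 1 x ^ 2 ≤ expSumDeriv c l 0 x * expSumDeriv c l 2 x := by
  set w := fun i => c i * exp (l i * x)
  have s := hs.summable_term
  have hquad (μ : ℝ) : 0 ≤ expSumDeriv c l 0 x * (μ * μ) + (-2 * expSumDeriv c l 1 x) * μ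
      + expSumDeriv c l 2 x := by
    have hvar : ∑' i, (l i - μ) ^ 2 * w i =
        ∑' i, (l i ^ 2 * w i - 2 * μ * (l i ^ 1 * w i) + μ ^ 2 * (l i ^ 0 * w i)) :=
      tsum_congr fun i => by ring
    rw [Summable.tsum_add ((s 2 x).sub ((s 1 x).mul_left _)) ((s 0 x).mul_left _),
      Summable.tsum_sub (s 2 x) ((s 1 x).mul_left _), tsum_mul_left, tsum_mul_left] at hvar
    have := hvar ▸ tsum_nonneg fun i =>
      mul_nonneg (sq_nonneg (l i - μ)) (mul_nonneg (hc i) (exp_pos (l i * x)).le)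
    simp only [expSumDeriv]
    linarith
  have := discrim_le_zero hquad
  rw [discrim] at this
  linarith

lemma abs_deriv_deriv_inv_expSumDeriv_le (hs : ExpMomentsSummable c l) (hc : ∀ i, 0 ≤ c i)
    (hpos : ∀ x, 0 < expSumDeriv c l 0 x) (x : ℝ) :
    |deriv (deriv fun y => (expSumDeriv c l 0 y)⁻¹) x| ≤
      2 * expSumDeriv c l 2 x / expSumDeriv c l 0 x ^ 2 := by
  rw [deriv_deriv_inv_eq (hasDerivAt_expSumDeriv hs 0) (hasDerivAt_expSumDeriv hs 1)
    (fun y => (hpos y).ne')]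
  have hcs := sq_expSumDeriv_one_le hs hc x
  have h₀ := hpos x
  set F₀ := expSumDeriv c l 0 x
  set F₁ := expSumDeriv c l 1 x
  set F₂ := expSumDeriv c l 2 x
  have hF₂ : 0 ≤ F₂ := (mul_nonneg_iff_of_pos_left h₀).1 ((sq_nonneg F₁).trans hcs)
  have hnum : |2 * F₁ ^ 2 - F₀ * F₂| ≤ 2 * F₀ * F₂ :=
    abs_le.2 ⟨by nlinarith [mul_nonneg h₀.le hF₂], by nlinarith [sq_nonneg F₁]⟩
  rw [abs_div, abs_of_pos (pow_pos h₀ 3)]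
  calc |2 * F₁ ^ 2 - F₀ * F₂| / F₀ ^ 3 ≤ 2 * F₀ * F₂ / F₀ ^ 3 := by gcongr
    _ = 2 * F₂ / F₀ ^ 2 := by field_simp

end ExpSum

noncomputable def thetaDeriv (a : ℝ) : ℕ → ℝ → ℝ :=
  expSumDeriv (fun k : ℤ => exp (-(a * k / 2) ^ 2)) (fun k : ℤ => a * k / 2)

lemma expMomentsSummable_theta {a : ℝ} (ha : a ≠ 0) :
    ExpMomentsSummable (fun k : ℤ => exp (-(a * k / 2) ^ 2)) (fun k : ℤ => a * k / 2) := by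
  intro n R
  refine ((summable_pow_mul_jacobiTheta₂_term_bound (|a| * R / (4 * π))
    (T := a ^ 2 / (4 * π)) (by positivity) n).mul_left ((|a| / 2) ^ n)).congr fun k => ?_
  have hexp : -π * (a ^ 2 / (4 * π) * k ^ 2 - 2 * (|a| * R / (4 * π)) * |(k : ℝ)|) =
      -(a * k / 2) ^ 2 + |a * k / 2| * R := by
    rw [abs_div, abs_mul, abs_two]
    field_simp
    ring
  rw [abs_exp, ← exp_add, Int.cast_abs, hexp, abs_div, abs_mul, abs_two]
  ring

lemma thetaDeriv_zero_pos {a : ℝ} (ha : a ≠ 0) (x : ℝ) : 0 < thetaDeriv a 0 x :=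
  ((expMomentsSummable_theta ha).summable_term 0 x).tsum_pos (fun k => by positivity) 0
    (by positivity)

lemma tsum_exp_neg_sub_sq_eq (a ξ : ℝ) :
    ∑' k : ℤ, exp (-(ξ - a * k) ^ 2 / 4) = exp (-ξ ^ 2 / 4) * thetaDeriv a 0 ξ := by
  rw [thetaDeriv, expSumDeriv, ← tsum_mul_left]
  refine tsum_congr fun k => ?_
  rw [pow_zero, one_mul, ← exp_add, ← exp_add]
  ring_nf

lemma summable_exp_neg_abs_int : Summable fun j : ℤ => exp (-|(j : ℝ)|) := by
  refine .of_nat_of_neg ?_ ?_ <;> simpa using summable_exp_neg_nat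

/-- Moving from `k₀` to `k₀ + j` lowers the exponent by at least `(a²/4)(j² - |j|)`. -/
lemma theta_term_le_nearest {a x : ℝ} (ha : 2 * π ≤ a) {k₀ : ℤ} (hk₀ : |x - a * k₀| ≤ a / 2)
    (j : ℤ) :
    exp (-(a * (k₀ + j) / 2) ^ 2) * exp (a * (k₀ + j) / 2 * x) ≤
      exp (π ^ 2 - 3 * |(j : ℝ)|) * (exp (-(a * k₀ / 2) ^ 2) * exp (a * k₀ / 2 * x)) := by
  simp only [← exp_add]
  refine exp_le_exp.2 ?_
  have hπ : 3 ≤ π ^ 2 := by nlinarith [pi_gt_three]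
  have ha2 : π ^ 2 ≤ a ^ 2 / 4 := by nlinarith [pi_pos]
  have hj : |(j : ℝ)| ≤ (j : ℝ) ^ 2 := by
    have := Int.natAbs_le_self_sq j
    rw [Int.natCast_natAbs] at this
    exact_mod_cast this
  have hju : (j : ℝ) * (x - a * k₀) ≤ |(j : ℝ)| * (a / 2) :=
    (le_abs_self _).trans ((abs_mul _ _).trans_le (mul_le_mul_of_nonneg_left hk₀ (abs_nonneg _)))
  have hju' := mul_le_mul_of_nonneg_left hju (by linarith [pi_pos] : 0 ≤ a / 2)
  nlinarith [mul_nonneg (sub_nonneg.2 ha2) (sub_nonneg.2 hj), sq_abs (j : ℝ),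
    mul_nonneg (sub_nonneg.2 hπ) (add_nonneg (sq_nonneg (|(j : ℝ)| - 1)) (abs_nonneg (j : ℝ)))]

lemma sq_theta_freq_le {a x : ℝ} (ha : 0 ≤ a) {k₀ : ℤ} (hk₀ : |x - a * k₀| ≤ a / 2) (j : ℤ) :
    (a * (k₀ + j) / 2) ^ 2 ≤ (x ^ 2 + a ^ 2) / 2 * exp (2 * |(j : ℝ)|) := by
  have hfreq : |a * (k₀ + j)| ≤ (|x| + a) * (1 + |(j : ℝ)|) :=
    calc |a * (k₀ + j)| = |x + -(x - a * k₀) + a * j| := by ring_nf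
      _ ≤ |x| + |-(x - a * k₀)| + |a * j| := abs_add_three _ _ _
      _ ≤ (|x| + a) * (1 + |(j : ℝ)|) := by
        rw [abs_neg, abs_mul, abs_of_nonneg ha]
        nlinarith [abs_nonneg x, abs_nonneg (j : ℝ)]
  have hexp : (1 + |(j : ℝ)|) ^ 2 ≤ exp (2 * |(j : ℝ)|) := by
    rw [two_mul, exp_add, ← sq]
    gcongr
    linarith [add_one_le_exp |(j : ℝ)|]
  calc (a * (k₀ + j) / 2) ^ 2 = |a * (k₀ + j)| ^ 2 / 4 := by rw [sq_abs]; ring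
    _ ≤ ((|x| + a) * (1 + |(j : ℝ)|)) ^ 2 / 4 := by gcongr
    _ ≤ (x ^ 2 + a ^ 2) / 2 * (1 + |(j : ℝ)|) ^ 2 := by
        rw [mul_pow]
        nlinarith [sq_abs x, sq_nonneg (|x| - a), sq_nonneg (1 + |(j : ℝ)|)]
    _ ≤ (x ^ 2 + a ^ 2) / 2 * exp (2 * |(j : ℝ)|) := by gcongr

lemma theta_moment_two_term_le {a x : ℝ} (ha : 2 * π ≤ a) {k₀ : ℤ} (hk₀ : |x - a * k₀| ≤ a / 2)
    (j : ℤ) :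
    (a * (k₀ + j) / 2) ^ 2 * (exp (-(a * (k₀ + j) / 2) ^ 2) * exp (a * (k₀ + j) / 2 * x)) ≤
      exp (π ^ 2) / 2 * (x ^ 2 + a ^ 2) * (exp (-(a * k₀ / 2) ^ 2) * exp (a * k₀ / 2 * x)) *
        exp (-|(j : ℝ)|) :=
  calc _ ≤ (x ^ 2 + a ^ 2) / 2 * exp (2 * |(j : ℝ)|) *
        (exp (π ^ 2 - 3 * |(j : ℝ)|) * (exp (-(a * k₀ / 2) ^ 2) * exp (a * k₀ / 2 * x))) :=
        mul_le_mul (sq_theta_freq_le (by linarith [pi_pos]) hk₀ j)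
          (theta_term_le_nearest ha hk₀ j) (by positivity) (by positivity)
    _ = _ := by
        rw [show π ^ 2 - 3 * |(j : ℝ)| = π ^ 2 + -|(j : ℝ)| + -(2 * |(j : ℝ)|) by ring,
          exp_add, exp_add, exp_neg (2 * |(j : ℝ)|)]
        field_simp

noncomputable def thetaMomentConst : ℝ := exp (π ^ 2) / 2 * ∑' j : ℤ, exp (-|(j : ℝ)|)

lemma thetaMomentConst_pos : 0 < thetaMomentConst := by
  have := summable_exp_neg_abs_int.tsum_pos (fun j => (exp_pos _).le) 0 (exp_pos _)
  unfold thetaMomentConst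
  positivity

lemma thetaDeriv_two_le {a : ℝ} (ha : 2 * π ≤ a) (x : ℝ) :
    thetaDeriv a 2 x ≤ thetaMomentConst * (x ^ 2 + a ^ 2) * thetaDeriv a 0 x := by
  set k₀ := round (x / a)
  have hk₀ : |x - a * k₀| ≤ a / 2 := by
    have ha₀ : 0 < a := by linarith [pi_pos]
    rw [show x - a * k₀ = a * (x / a - k₀) by field_simp, abs_mul, abs_of_pos ha₀]
    nlinarith [abs_sub_round (x / a)]
  have hsum := (expMomentsSummable_theta (a := a) (by linarith [pi_pos])).summable_term
  have hk₀_le : exp (-(a * k₀ / 2) ^ 2) * exp (a * k₀ / 2 * x) ≤ thetaDeriv a 0 x := by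
    simpa [thetaDeriv, expSumDeriv] using (hsum 0 x).le_tsum k₀ fun k _ => by positivity
  calc thetaDeriv a 2 x = ∑' j : ℤ, (a * ((k₀ + j : ℤ) : ℝ) / 2) ^ 2 *
        (exp (-(a * ((k₀ + j : ℤ) : ℝ) / 2) ^ 2) * exp (a * ((k₀ + j : ℤ) : ℝ) / 2 * x)) :=
        ((Equiv.addLeft k₀).tsum_eq _).symm
    _ ≤ ∑' j : ℤ, exp (π ^ 2) / 2 * (x ^ 2 + a ^ 2) *
        (exp (-(a * k₀ / 2) ^ 2) * exp (a * k₀ / 2 * x)) * exp (-|(j : ℝ)|) :=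
        Summable.tsum_le_tsum (fun j => by push_cast; exact theta_moment_two_term_le ha hk₀ j)
          ((Equiv.addLeft k₀).summable_iff.2 (hsum 2 x)) (summable_exp_neg_abs_int.mul_left _)
    _ = thetaMomentConst * (x ^ 2 + a ^ 2) * (exp (-(a * k₀ / 2) ^ 2) * exp (a * k₀ / 2 * x)) := by
        rw [tsum_mul_left, thetaMomentConst]
        ring
    _ ≤ thetaMomentConst * (x ^ 2 + a ^ 2) * thetaDeriv a 0 x := by
        have := thetaMomentConst_pos
        gcongr

lemma abs_deriv_deriv_inv_thetaDeriv_le {a : ℝ} (ha : 2 * π ≤ a) (x : ℝ) :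
    |deriv (deriv fun y => (thetaDeriv a 0 y)⁻¹) x| ≤
      2 * thetaMomentConst * (x ^ 2 + a ^ 2) * (thetaDeriv a 0 x)⁻¹ := by
  have ha₀ : a ≠ 0 := by linarith [pi_pos]
  have hF₀ := thetaDeriv_zero_pos ha₀ x
  calc _ ≤ 2 * thetaDeriv a 2 x / thetaDeriv a 0 x ^ 2 :=
        abs_deriv_deriv_inv_expSumDeriv_le (expMomentsSummable_theta ha₀)
          (fun k => (exp_pos _).le) (thetaDeriv_zero_pos ha₀) x
    _ ≤ 2 * (thetaMomentConst * (x ^ 2 + a ^ 2) * thetaDeriv a 0 x) / thetaDeriv a 0 x ^ 2 := by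
        gcongr
        exact thetaDeriv_two_le ha x
    _ = _ := by field_simp

theorem gaussian_multiplier_second_deriv_bound :
    ∃ C : ℝ, 0 < C ∧ ∀ h : ℝ, 0 < h → h ≤ 1 →
      ∀ m : ℝ → ℝ,
        (∀ ξ : ℝ, m ξ = Real.exp (-ξ ^ 2 / 4) /
            ∑' k : ℤ, Real.exp (-(ξ - 2 * Real.pi * (k : ℝ) / h) ^ 2 / 4)) →
        ∀ ktilde : ℕ, 1 ≤ ktilde →
          ∀ ξ ∈ Set.Icc (2 * Real.pi * ((ktilde : ℝ) - 1) / h) (2 * Real.pi * (ktilde : ℝ) / h),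
            |deriv (deriv m) ξ| ≤ C * ((ktilde : ℝ) / h) ^ 2 * m ξ := by
  refine ⟨16 * π ^ 2 * thetaMomentConst, mul_pos (by positivity) thetaMomentConst_pos,
    fun h hh₀ hh₁ m hm kt hkt ξ hξ => ?_⟩
  set a := 2 * π / h with ha_def
  have ha : 2 * π ≤ a := by rw [le_div_iff₀ hh₀]; nlinarith [pi_pos]
  have hm' : m = fun y => (thetaDeriv a 0 y)⁻¹ := funext fun y => by
    have hshift (k : ℤ) : y - 2 * π * k / h = y - a * k := by rw [ha_def]; ring
    simp_rw [hm, hshift, tsum_exp_neg_sub_sq_eq]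
    field_simp
  have hkt' : (1 : ℝ) ≤ kt := by exact_mod_cast hkt
  have hξ₀ : 0 ≤ ξ := (div_nonneg (mul_nonneg (by positivity) (by linarith)) hh₀.le).trans hξ.1
  have hξa : ξ ≤ a * kt := hξ.2.trans_eq (by rw [ha_def]; ring)
  have hquad : ξ ^ 2 + a ^ 2 ≤ 2 * a ^ 2 * kt ^ 2 := by
    have := le_mul_of_one_le_right (sq_nonneg a) (one_le_pow₀ (n := 2) hkt')
    nlinarith [pow_le_pow_left₀ hξ₀ hξa 2]
  have hF₀ := thetaDeriv_zero_pos (a := a) (by linarith [pi_pos]) ξ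
  have hK := thetaMomentConst_pos
  rw [hm']
  calc _ ≤ 2 * thetaMomentConst * (ξ ^ 2 + a ^ 2) * (thetaDeriv a 0 ξ)⁻¹ :=
        abs_deriv_deriv_inv_thetaDeriv_le ha ξ
    _ ≤ 2 * thetaMomentConst * (2 * a ^ 2 * kt ^ 2) * (thetaDeriv a 0 ξ)⁻¹ := by gcongr
    _ = 16 * π ^ 2 * thetaMomentConst * ((kt : ℝ) / h) ^ 2 * (thetaDeriv a 0 ξ)⁻¹ := by
        rw [ha_def]
        field_simp
        ring
end

section
/- Let 0 < h ≤ 1 and m_h(ξ) = exp(-ξ²/4)/∑_{k∈ℤ} exp(-(ξ-2πk/h)²/4). There is a constant C > 0, independent of h, such that ∫_ℝ |m_h''(ξ)| dξ ≤ C h^{-3}. -/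
/-!
With `β = π / h`, expanding the square gives `m_h = 1 / T₀`, where
`T_p(ξ) = thetaMoment β p ξ = ∑ₖ (βk)^p exp(βkξ - (βk)²)`, and termwise differentiation gives
`T_p' = T_{p+1}`. Hence `m_h'' = (2T₁² - T₀T₂) / T₀³`, and Cauchy–Schwarz (`T₁² ≤ T₀T₂`) yields
`|m_h''| ≤ T₂ / T₀²`. Shifting the summation index to the `k` nearest to `ξ / (2β)`
(quasi-periodicity of the terms) bounds `T₂ ≤ C (β² + ξ²) T₀`, so `|m_h''| ≤ C (β² + ξ²) m_h`.
Finally `m_h ≤ 1` always and `m_h(ξ) ≤ exp((β² - ξ²)/4)` (Gaussian smallness), so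
`|m_h''(ξ)| ≤ C β² exp(-ξ²/(8β²))`, whose integral is `O(β³) = O(h⁻³)`.
-/

open Real MeasureTheory

lemma abs_intCast_le_sq (j : ℤ) : |(j : ℝ)| ≤ (j : ℝ) ^ 2 := by
  have : |j| ≤ j ^ 2 := by rw [← Int.natCast_natAbs]; exact Int.natAbs_le_self_sq j
  exact_mod_cast this

lemma one_add_mul_exp_neg_le {u : ℝ} (hu : 0 ≤ u) : (1 + u) * exp (-u / 4) ≤ 9 * exp (-u / 8) := by
  have h₁ : 1 + u ≤ 9 * exp (u / 8) := by
    linarith [add_one_le_exp (u / 8), one_le_exp (by positivity : 0 ≤ u / 8)]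
  calc (1 + u) * exp (-u / 4) ≤ 9 * exp (u / 8) * exp (-u / 4) := by gcongr
    _ = 9 * exp (-u / 8) := by rw [mul_assoc, ← exp_add]; ring_nf

noncomputable section

def thetaTerm (β : ℝ) (k : ℤ) (ξ : ℝ) : ℝ := exp (β * k * ξ - (β * k) ^ 2)

def thetaMoment (β : ℝ) (p : ℕ) (ξ : ℝ) : ℝ := ∑' k : ℤ, (β * k) ^ p * thetaTerm β k ξ

/-- Bounds `∑ⱼ (1 + j²) thetaTerm β j d` uniformly in `β ≥ 1` and `|d| ≤ β`. -/
def thetaWeightSum : ℝ := ∑' j : ℤ, (1 + (j : ℝ) ^ 2) * exp (|(j : ℝ)| - (j : ℝ) ^ 2)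

end

section ThetaMoment

variable {β : ℝ}

lemma thetaTerm_pos (β : ℝ) (k : ℤ) (ξ : ℝ) : 0 < thetaTerm β k ξ := exp_pos _

lemma thetaTerm_eq_exp_sq_sub_sq (β : ℝ) (k : ℤ) (ξ : ℝ) :
    thetaTerm β k ξ = exp ((ξ ^ 2 - (ξ - 2 * β * k) ^ 2) / 4) := by
  rw [thetaTerm]; ring_nf

lemma thetaTerm_add (β : ℝ) (k j : ℤ) (ξ : ℝ) :
    thetaTerm β (k + j) ξ = thetaTerm β k ξ * thetaTerm β j (ξ - 2 * β * k) := by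
  rw [thetaTerm, thetaTerm, thetaTerm, ← exp_add]; push_cast; ring_nf

lemma hasDerivAt_thetaTerm (β : ℝ) (k : ℤ) (ξ : ℝ) :
    HasDerivAt (thetaTerm β k) (β * k * thetaTerm β k ξ) ξ := by
  have := (((hasDerivAt_id ξ).const_mul (β * k)).sub_const ((β * k) ^ 2)).exp
  exact this.congr_deriv (by rw [thetaTerm, id, mul_one, mul_comm])

lemma summable_thetaMoment_majorant (hβ : β ≠ 0) (p : ℕ) (R : ℝ) :
    Summable fun k : ℤ => |β * k| ^ p * exp (|β * k| * R - (β * k) ^ 2) := by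
  have hT : 0 < β ^ 2 / π := by positivity
  refine ((summable_pow_mul_jacobiTheta₂_term_bound (|β| * R / (2 * π)) hT p).mul_left
    (|β| ^ p)).congr fun k => ?_
  have hexp : -π * (β ^ 2 / π * k ^ 2 - 2 * (|β| * R / (2 * π)) * |(k : ℝ)|)
      = |β| * |(k : ℝ)| * R - (β * k) ^ 2 := by
    field_simp; ring
  rw [abs_mul, mul_pow, Int.cast_abs, hexp]
  ring

lemma abs_thetaMoment_term_le (p : ℕ) (k : ℤ) {ξ R : ℝ} (hξ : |ξ| ≤ R) :
    |(β * k) ^ p * thetaTerm β k ξ| ≤ |β * k| ^ p * exp (|β * k| * R - (β * k) ^ 2) := by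
  have hlin : β * k * ξ ≤ |β * k| * R := calc
    β * k * ξ ≤ |β * k * ξ| := le_abs_self _
    _ = |β * k| * |ξ| := abs_mul _ _
    _ ≤ |β * k| * R := by gcongr
  rw [abs_mul, abs_pow, thetaTerm, abs_exp]
  exact mul_le_mul_of_nonneg_left (exp_le_exp.2 (by linarith)) (by positivity)

lemma summable_thetaMoment_term (hβ : β ≠ 0) (p : ℕ) (ξ : ℝ) :
    Summable fun k : ℤ => (β * k) ^ p * thetaTerm β k ξ :=
  .of_norm_bounded (summable_thetaMoment_majorant hβ p |ξ|)
    fun k => abs_thetaMoment_term_le p k le_rfl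

lemma hasDerivAt_thetaMoment (hβ : β ≠ 0) (p : ℕ) (ξ : ℝ) :
    HasDerivAt (thetaMoment β p) (thetaMoment β (p + 1) ξ) ξ := by
  have hξ : ξ ∈ Set.Ioo (-(|ξ| + 1)) (|ξ| + 1) := abs_lt.1 (by linarith)
  refine hasDerivAt_tsum_of_isPreconnected (g := fun (k : ℤ) z => (β * k) ^ p * thetaTerm β k z)
    (g' := fun (k : ℤ) z => (β * k) ^ (p + 1) * thetaTerm β k z)
    (summable_thetaMoment_majorant hβ (p + 1) (|ξ| + 1)) isOpen_Ioo isPreconnected_Ioo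
    (fun k y _ => ?_)
    (fun k y hy => abs_thetaMoment_term_le (p + 1) k (abs_lt.2 hy).le) hξ
    (summable_thetaMoment_term hβ p ξ) hξ
  have := (hasDerivAt_thetaTerm β k y).const_mul ((β * k) ^ p)
  rwa [← mul_assoc, ← pow_succ] at this

lemma thetaTerm_le_thetaMoment_zero (hβ : β ≠ 0) (k : ℤ) (ξ : ℝ) :
    thetaTerm β k ξ ≤ thetaMoment β 0 ξ := by
  simpa [thetaMoment] using (summable_thetaMoment_term hβ 0 ξ).le_tsum k
    fun j _ => by simpa using (thetaTerm_pos β j ξ).le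

lemma one_le_thetaMoment_zero (hβ : β ≠ 0) (ξ : ℝ) : 1 ≤ thetaMoment β 0 ξ := by
  simpa [thetaTerm] using thetaTerm_le_thetaMoment_zero hβ 0 ξ

lemma thetaMoment_zero_pos (hβ : β ≠ 0) (ξ : ℝ) : 0 < thetaMoment β 0 ξ :=
  one_pos.trans_le (one_le_thetaMoment_zero hβ ξ)

/-- Cauchy–Schwarz: `x ↦ ∑ₖ (x - βk)² thetaTerm β k ξ` is a nonnegative quadratic polynomial. -/
lemma thetaMoment_one_sq_le (hβ : β ≠ 0) (ξ : ℝ) :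
    thetaMoment β 1 ξ ^ 2 ≤ thetaMoment β 0 ξ * thetaMoment β 2 ξ := by
  have hS := summable_thetaMoment_term hβ (ξ := ξ)
  have hquad : ∀ x : ℝ, 0 ≤ thetaMoment β 0 ξ * (x * x) + (-2 * thetaMoment β 1 ξ) * x
      + thetaMoment β 2 ξ := fun x => by
    have hsum := (((hS 0).hasSum.mul_right (x * x)).add ((hS 1).hasSum.mul_left (-2 * x))).add
      (hS 2).hasSum
    have := hsum.nonneg fun k => by
      have : 0 ≤ (x - β * k) ^ 2 * thetaTerm β k ξ :=
        mul_nonneg (sq_nonneg _) (thetaTerm_pos β k ξ).le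
      linarith
    unfold thetaMoment
    linarith
  have := discrim_le_zero hquad
  rw [discrim] at this
  linarith

lemma summable_thetaWeight :
    Summable fun j : ℤ => (1 + (j : ℝ) ^ 2) * exp (|(j : ℝ)| - (j : ℝ) ^ 2) := by
  have hT : (0 : ℝ) < 1 / π := by positivity
  refine ((summable_pow_mul_jacobiTheta₂_term_bound (1 / (2 * π)) hT 0).add
    (summable_pow_mul_jacobiTheta₂_term_bound (1 / (2 * π)) hT 2)).congr fun j => ?_
  have hexp : -π * (1 / π * j ^ 2 - 2 * (1 / (2 * π)) * |(j : ℝ)|) = |(j : ℝ)| - (j : ℝ) ^ 2 := by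
    field_simp; ring
  simp only [Int.cast_abs, hexp, pow_zero, sq_abs]
  ring

lemma thetaWeightSum_pos : 0 < thetaWeightSum :=
  summable_thetaWeight.tsum_pos (fun j => by positivity) 0 (by simp)

lemma exists_abs_sub_two_mul_int_le (hβ : 0 < β) (ξ : ℝ) : ∃ k : ℤ, |ξ - 2 * β * k| ≤ β := by
  refine ⟨round (ξ / (2 * β)), ?_⟩
  have hround := abs_sub_round (ξ / (2 * β))
  have hscale : ξ - 2 * β * round (ξ / (2 * β)) = 2 * β * (ξ / (2 * β) - round (ξ / (2 * β))) := by
    field_simp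
  rw [hscale, abs_mul, abs_of_pos (by positivity)]
  nlinarith

lemma exp_sq_sub_sq_le_thetaMoment_zero (hβ : 0 < β) (ξ : ℝ) :
    exp ((ξ ^ 2 - β ^ 2) / 4) ≤ thetaMoment β 0 ξ := by
  obtain ⟨k, hk⟩ := exists_abs_sub_two_mul_int_le hβ ξ
  calc exp ((ξ ^ 2 - β ^ 2) / 4) ≤ thetaTerm β k ξ := by
        rw [thetaTerm_eq_exp_sq_sub_sq]
        exact exp_le_exp.2 (by nlinarith [sq_abs (ξ - 2 * β * k), abs_nonneg (ξ - 2 * β * k)])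
    _ ≤ thetaMoment β 0 ξ := thetaTerm_le_thetaMoment_zero hβ.ne' k ξ

lemma inv_thetaMoment_zero_le (hβ : 1 ≤ β) (ξ : ℝ) :
    (thetaMoment β 0 ξ)⁻¹ ≤ exp (1 / 4) * exp (-(ξ / β) ^ 2 / 4) := by
  have hβ0 : 0 < β := by linarith
  have hξ : ξ ^ 2 = β ^ 2 * (ξ / β) ^ 2 := by field_simp
  set u := (ξ / β) ^ 2
  rw [← exp_add]
  rcases le_total u 1 with hu | hu
  · calc (thetaMoment β 0 ξ)⁻¹ ≤ 1 := inv_le_one_of_one_le₀ (one_le_thetaMoment_zero hβ0.ne' ξ)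
      _ ≤ exp (1 / 4 + -u / 4) := one_le_exp (by linarith)
  · calc (thetaMoment β 0 ξ)⁻¹ ≤ (exp ((ξ ^ 2 - β ^ 2) / 4))⁻¹ :=
          inv_anti₀ (exp_pos _) (exp_sq_sub_sq_le_thetaMoment_zero hβ0 ξ)
      _ = exp (β ^ 2 * (1 - u) / 4) := by rw [← exp_neg, hξ]; ring_nf
      _ ≤ exp (1 / 4 + -u / 4) := by
          have hβ2 : 1 ≤ β ^ 2 := by nlinarith
          exact exp_le_exp.2 (by nlinarith [mul_nonneg (sub_nonneg.2 hβ2) (sub_nonneg.2 hu)])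

lemma thetaTerm_le_exp_abs_sub_sq (hβ : 1 ≤ β) (j : ℤ) {d : ℝ} (hd : |d| ≤ β) :
    thetaTerm β j d ≤ exp (|(j : ℝ)| - (j : ℝ) ^ 2) := by
  have hβ0 : 0 ≤ β := by linarith
  have hlin : β * j * d ≤ β ^ 2 * |(j : ℝ)| := calc
    β * j * d ≤ |β * j * d| := le_abs_self _
    _ = β * |(j : ℝ)| * |d| := by rw [abs_mul, abs_mul, abs_of_nonneg hβ0]
    _ ≤ β * |(j : ℝ)| * β := by gcongr
    _ = β ^ 2 * |(j : ℝ)| := by ring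
  have hj := abs_intCast_le_sq j
  have hβ2 : 1 ≤ β ^ 2 := by nlinarith
  rw [thetaTerm]
  exact exp_le_exp.2 (by nlinarith [mul_nonneg (sub_nonneg.2 hβ2) (sub_nonneg.2 hj)])

lemma sq_mul_thetaTerm_add_le (hβ : 1 ≤ β) {ξ : ℝ} {k : ℤ} (hk : |ξ - 2 * β * k| ≤ β) (j : ℤ) :
    (β * ((k + j : ℤ) : ℝ)) ^ 2 * thetaTerm β (k + j) ξ
      ≤ 2 * β ^ 2 * (1 + (k : ℝ) ^ 2) * thetaTerm β k ξ *
        ((1 + (j : ℝ) ^ 2) * exp (|(j : ℝ)| - (j : ℝ) ^ 2)) := by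
  have htk := thetaTerm_pos β k ξ
  have hsq : (β * ((k + j : ℤ) : ℝ)) ^ 2 ≤ 2 * β ^ 2 * (1 + (k : ℝ) ^ 2) * (1 + (j : ℝ) ^ 2) := by
    push_cast
    nlinarith [sq_nonneg (β * (k * j - 1)), sq_nonneg (β * (k - j))]
  rw [thetaTerm_add]
  calc (β * ((k + j : ℤ) : ℝ)) ^ 2 * (thetaTerm β k ξ * thetaTerm β j (ξ - 2 * β * k))
      ≤ (2 * β ^ 2 * (1 + (k : ℝ) ^ 2) * (1 + (j : ℝ) ^ 2)) *
        (thetaTerm β k ξ * exp (|(j : ℝ)| - (j : ℝ) ^ 2)) :=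
        mul_le_mul hsq (mul_le_mul_of_nonneg_left (thetaTerm_le_exp_abs_sub_sq hβ j hk) htk.le)
          (mul_pos htk (thetaTerm_pos β j _)).le (by positivity)
    _ = _ := by ring

lemma thetaMoment_two_le (hβ : 1 ≤ β) (ξ : ℝ) :
    thetaMoment β 2 ξ ≤ 3 * thetaWeightSum * (β ^ 2 + ξ ^ 2) * thetaMoment β 0 ξ := by
  have hβ0 : 0 < β := by linarith
  obtain ⟨k, hk⟩ := exists_abs_sub_two_mul_int_le hβ0 ξ
  set c := 2 * β ^ 2 * (1 + (k : ℝ) ^ 2) * thetaTerm β k ξ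
  have hshift : thetaMoment β 2 ξ = ∑' j : ℤ, (β * ((k + j : ℤ) : ℝ)) ^ 2 * thetaTerm β (k + j) ξ :=
    ((Equiv.addLeft k).tsum_eq fun i : ℤ => (β * i) ^ 2 * thetaTerm β i ξ).symm
  have hc : c ≤ 3 * (β ^ 2 + ξ ^ 2) * thetaMoment β 0 ξ := by
    have hk2 : 2 * β ^ 2 * (1 + (k : ℝ) ^ 2) ≤ 3 * (β ^ 2 + ξ ^ 2) := by
      nlinarith [sq_abs (ξ - 2 * β * k), abs_nonneg (ξ - 2 * β * k),
        sq_nonneg (ξ + (ξ - 2 * β * k))]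
    exact mul_le_mul hk2 (thetaTerm_le_thetaMoment_zero hβ0.ne' k ξ) (thetaTerm_pos β k ξ).le
      (by positivity)
  calc thetaMoment β 2 ξ ≤ ∑' j : ℤ, c * ((1 + (j : ℝ) ^ 2) * exp (|(j : ℝ)| - (j : ℝ) ^ 2)) := by
        rw [hshift]
        exact Summable.tsum_le_tsum (sq_mul_thetaTerm_add_le hβ hk)
          ((Equiv.addLeft k).summable_iff.2 (summable_thetaMoment_term hβ0.ne' 2 ξ))
          (summable_thetaWeight.mul_left c)
    _ = c * thetaWeightSum := tsum_mul_left
    _ ≤ 3 * (β ^ 2 + ξ ^ 2) * thetaMoment β 0 ξ * thetaWeightSum :=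
        mul_le_mul_of_nonneg_right hc thetaWeightSum_pos.le
    _ = 3 * thetaWeightSum * (β ^ 2 + ξ ^ 2) * thetaMoment β 0 ξ := by ring

lemma deriv_deriv_inv_thetaMoment_zero (hβ : β ≠ 0) (ξ : ℝ) :
    deriv (deriv fun x => (thetaMoment β 0 x)⁻¹) ξ
      = (2 * thetaMoment β 1 ξ ^ 2 - thetaMoment β 0 ξ * thetaMoment β 2 ξ)
        / thetaMoment β 0 ξ ^ 3 := by
  have hne : ∀ x, thetaMoment β 0 x ≠ 0 := fun x => (thetaMoment_zero_pos hβ x).ne'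
  have hderiv : deriv (fun x => (thetaMoment β 0 x)⁻¹)
      = fun x => -thetaMoment β 1 x / thetaMoment β 0 x ^ 2 :=
    funext fun x => ((hasDerivAt_thetaMoment hβ 0 x).inv (hne x)).deriv
  rw [hderiv, ((hasDerivAt_thetaMoment hβ 1 ξ).fun_neg.fun_div
    ((hasDerivAt_thetaMoment hβ 0 ξ).fun_pow 2)
    (pow_ne_zero 2 (hne ξ))).deriv]
  field_simp [hne ξ]
  ring

lemma abs_deriv_deriv_inv_thetaMoment_zero_le (hβ : β ≠ 0) (ξ : ℝ) :
    |deriv (deriv fun x => (thetaMoment β 0 x)⁻¹) ξ|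
      ≤ thetaMoment β 2 ξ / thetaMoment β 0 ξ ^ 2 := by
  have hT0 := thetaMoment_zero_pos hβ ξ
  have hCS := thetaMoment_one_sq_le hβ ξ
  have hnum : |2 * thetaMoment β 1 ξ ^ 2 - thetaMoment β 0 ξ * thetaMoment β 2 ξ|
      ≤ thetaMoment β 0 ξ * thetaMoment β 2 ξ :=
    abs_le.2 ⟨by nlinarith [sq_nonneg (thetaMoment β 1 ξ)], by linarith⟩
  rw [deriv_deriv_inv_thetaMoment_zero hβ, abs_div, abs_of_pos (pow_pos hT0 3)]
  calc _ ≤ thetaMoment β 0 ξ * thetaMoment β 2 ξ / thetaMoment β 0 ξ ^ 3 :=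
        div_le_div_of_nonneg_right hnum (pow_pos hT0 3).le
    _ = thetaMoment β 2 ξ / thetaMoment β 0 ξ ^ 2 := by field_simp

lemma abs_deriv_deriv_inv_thetaMoment_zero_le_gaussian (hβ : 1 ≤ β) (ξ : ℝ) :
    |deriv (deriv fun x => (thetaMoment β 0 x)⁻¹) ξ|
      ≤ 27 * exp (1 / 4) * thetaWeightSum * β ^ 2 * exp (-(1 / (8 * β ^ 2)) * ξ ^ 2) := by
  have hβ0 : 0 < β := by linarith
  have hK := thetaWeightSum_pos
  have hξ : β ^ 2 + ξ ^ 2 = β ^ 2 * (1 + (ξ / β) ^ 2) := by field_simp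
  have hgauss : exp (-(ξ / β) ^ 2 / 8) = exp (-(1 / (8 * β ^ 2)) * ξ ^ 2) := by
    congr 1; field_simp
  set u := (ξ / β) ^ 2
  calc _ ≤ thetaMoment β 2 ξ / thetaMoment β 0 ξ ^ 2 :=
        abs_deriv_deriv_inv_thetaMoment_zero_le hβ0.ne' ξ
    _ ≤ 3 * thetaWeightSum * (β ^ 2 + ξ ^ 2) * thetaMoment β 0 ξ / thetaMoment β 0 ξ ^ 2 := by
        gcongr; exact thetaMoment_two_le hβ ξ
    _ = 3 * thetaWeightSum * β ^ 2 * (1 + u) * (thetaMoment β 0 ξ)⁻¹ := by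
        rw [hξ]; field_simp
    _ ≤ 3 * thetaWeightSum * β ^ 2 * (1 + u) * (exp (1 / 4) * exp (-u / 4)) := by
        gcongr; exact inv_thetaMoment_zero_le hβ ξ
    _ = 3 * exp (1 / 4) * thetaWeightSum * β ^ 2 * ((1 + u) * exp (-u / 4)) := by ring
    _ ≤ 3 * exp (1 / 4) * thetaWeightSum * β ^ 2 * (9 * exp (-u / 8)) :=
        mul_le_mul_of_nonneg_left (one_add_mul_exp_neg_le (sq_nonneg _)) (by positivity)
    _ = _ := by rw [hgauss]; ring

lemma tsum_exp_neg_sub_sq_div_four (β ξ : ℝ) :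
    ∑' k : ℤ, exp (-(ξ - 2 * β * k) ^ 2 / 4) = exp (-ξ ^ 2 / 4) * thetaMoment β 0 ξ := by
  rw [thetaMoment, ← tsum_mul_left]
  congr 1; ext k
  rw [pow_zero, one_mul, thetaTerm_eq_exp_sq_sub_sq, ← exp_add]
  ring_nf

end ThetaMoment

theorem gaussian_multiplier_second_deriv_L1 :
    ∃ C : ℝ, 0 < C ∧ ∀ h : ℝ, 0 < h → h ≤ 1 →
      ∀ m : ℝ → ℝ,
        (∀ ξ : ℝ, m ξ = Real.exp (-ξ ^ 2 / 4) /
            ∑' k : ℤ, Real.exp (-(ξ - 2 * Real.pi * (k : ℝ) / h) ^ 2 / 4)) →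
        (∫ ξ : ℝ, |deriv (deriv m) ξ|) ≤ C * h⁻¹ ^ 3 := by
  have hK := thetaWeightSum_pos
  refine ⟨27 * exp (1 / 4) * thetaWeightSum * √(8 * π) * π ^ 3, by positivity, ?_⟩
  intro h hh hh1 m hm
  set β := π / h with hβ_def
  have hβ : 1 ≤ β := by rw [le_div_iff₀ hh]; linarith [pi_gt_three]
  have hm' : m = fun ξ => (thetaMoment β 0 ξ)⁻¹ := funext fun ξ => by
    have hk : ∀ k : ℤ, 2 * π * (k : ℝ) / h = 2 * β * k := fun k => by ring
    simp only [hm, hk, tsum_exp_neg_sub_sq_div_four]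
    exact div_mul_cancel_left₀ (exp_pos _).ne' _
  subst hm'
  calc (∫ ξ : ℝ, |deriv (deriv fun x => (thetaMoment β 0 x)⁻¹) ξ|)
      ≤ ∫ ξ : ℝ, 27 * exp (1 / 4) * thetaWeightSum * β ^ 2 * exp (-(1 / (8 * β ^ 2)) * ξ ^ 2) :=
        integral_mono_of_nonneg (ae_of_all _ fun _ => abs_nonneg _)
          ((integrable_exp_neg_mul_sq (by positivity)).const_mul _)
          (ae_of_all _ (abs_deriv_deriv_inv_thetaMoment_zero_le_gaussian hβ))
    _ = 27 * exp (1 / 4) * thetaWeightSum * β ^ 2 * √(8 * π * β ^ 2) := by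
        rw [integral_const_mul, integral_gaussian]; congr 2; field_simp
    _ = 27 * exp (1 / 4) * thetaWeightSum * √(8 * π) * π ^ 3 * h⁻¹ ^ 3 := by
        rw [sqrt_mul (by positivity), sqrt_sq (by positivity), hβ_def]; ring
end
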